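/- Consider the residual-sketch iteration: given A ∈ ℝ^{m×n}, b ∈ ℝ^m, x₀ ∈ ℝ^n, set r₀ = b − A x₀ and for j ≥ 1 let S_j = [r₀ … r_{j−1}], p_j = Aᵀ S_j (S_jᵀ A Aᵀ S_j)⁻¹ S_jᵀ r_{j−1}, x_j = x_{j−1} + p_j, r_j = b − A x_j, assuming the Gram matrices S_jᵀ A Aᵀ S_j are invertible for j = 1,…,k. Then the residuals are mutually orthogonal: r_iᵀ r_j = 0 for all 0 ≤ i < j ≤ k. -/

import Mathlib

/-
Each step is an oblique projection: with `G = Sⱼᵀ A Aᵀ Sⱼ`, the new residual is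
`rⱼ = rⱼ₋₁ - (A Aᵀ Sⱼ) G⁻¹ Sⱼᵀ rⱼ₋₁`, and applying `Sⱼᵀ` gives
`Sⱼᵀ rⱼ = Sⱼᵀ rⱼ₋₁ - G G⁻¹ Sⱼᵀ rⱼ₋₁ = 0`. Since the columns of `Sⱼ` are `r₀, …, rⱼ₋₁`,
this says that `rⱼ` is orthogonal to every earlier residual.
-/

open Matrix

/-- `colCat r k` is the matrix `[r 0 … r (k-1)]` whose `l`-th column is `r l`. -/
def colCat {m : ℕ} (r : ℕ → Fin m → ℝ) (k : ℕ) : Matrix (Fin m) (Fin k) ℝ :=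
  Matrix.of fun i l => r l.val i

theorem Matrix.mulVec_sub_mulVec_inv_mul_mulVec_eq_zero {ι κ R : Type*} [Fintype ι] [Fintype κ]
    [DecidableEq κ] [CommRing R] (P : Matrix κ ι R) (M : Matrix ι κ R) (h : IsUnit (P * M))
    (v : ι → R) : P *ᵥ (v - M *ᵥ ((P * M)⁻¹ *ᵥ (P *ᵥ v))) = 0 := by
  have hPM : P * M * (P * M)⁻¹ = 1 := Matrix.mul_nonsing_inv _ ((isUnit_iff_isUnit_det _).mp h)
  rw [mulVec_sub, mulVec_mulVec, mulVec_mulVec, hPM, one_mulVec, sub_self]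

theorem colCat_transpose_mulVec_apply {m : ℕ} (r : ℕ → Fin m → ℝ) (k : ℕ) (v : Fin m → ℝ)
    (l : Fin k) : ((colCat r k)ᵀ *ᵥ v) l = r l ⬝ᵥ v :=
  rfl

theorem sketch_transpose_mulVec_updated_residual_eq_zero {ι μ κ R : Type*} [Fintype ι]
    [Fintype μ] [Fintype κ] [DecidableEq κ] [CommRing R] (A : Matrix ι μ R) (S : Matrix ι κ R)
    (hG : IsUnit (Sᵀ * A * Aᵀ * S)) (v : ι → R) :
    Sᵀ *ᵥ (v - A *ᵥ ((Aᵀ * S) *ᵥ ((Sᵀ * A * Aᵀ * S)⁻¹ *ᵥ (Sᵀ *ᵥ v)))) = 0 := by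
  have hassoc : Sᵀ * A * Aᵀ * S = Sᵀ * (A * Aᵀ * S) := by simp only [Matrix.mul_assoc]
  rw [hassoc] at hG ⊢
  rw [mulVec_mulVec, ← Matrix.mul_assoc]
  exact mulVec_sub_mulVec_inv_mul_mulVec_eq_zero _ _ hG v

/-- In the residual-sketch (PLSS) iteration the residuals are mutually
orthogonal: `r_iᵀ r_j = 0` for all `0 ≤ i < j ≤ k`. -/
theorem stmt12 (m n k : ℕ)
    (A : Matrix (Fin m) (Fin n) ℝ) (b : Fin m → ℝ)
    (x p : ℕ → Fin n → ℝ) (r : ℕ → Fin m → ℝ)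
    (hr : ∀ j, r j = b - A.mulVec (x j))
    (hinv : ∀ j, 1 ≤ j → j ≤ k → IsUnit ((colCat r j)ᵀ * A * Aᵀ * colCat r j))
    (hp : ∀ j, 1 ≤ j → j ≤ k →
      p j = (Aᵀ * colCat r j).mulVec
        (((colCat r j)ᵀ * A * Aᵀ * colCat r j)⁻¹.mulVec
          ((colCat r j)ᵀ.mulVec (r (j - 1)))))
    (hx : ∀ j, 1 ≤ j → j ≤ k → x j = x (j - 1) + p j) :
    ∀ i j, i < j → j ≤ k → r i ⬝ᵥ r j = 0 := by
  intro i j hij hjk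
  have hj : 1 ≤ j := by omega
  have hstep : r j = r (j - 1) - A *ᵥ p j := by
    rw [hr j, hr (j - 1), hx j hj hjk, mulVec_add]
    abel
  have horth : (colCat r j)ᵀ *ᵥ r j = 0 := by
    rw [hstep, hp j hj hjk]
    exact sketch_transpose_mulVec_updated_residual_eq_zero A _ (hinv j hj hjk) _
  simpa only [colCat_transpose_mulVec_apply, Pi.zero_apply] using congrFun horth ⟨i, hij⟩
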